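/- Let γ be a smooth closed curve in ℝⁿ parametrized by arclength, with spontaneous curvature c = (c∘γ) + (f∘γ)τ where c(x) = Lx + M is affine with L positive semi-definite, f smooth, and λ > 0. If the generalized Helfrich energy H(γ) = (1/2)∫_γ |κ - c|² ds + λ L(γ) satisfies H(γ) ≤ E, then (1/2)∫_γ |κ|² ds + (1/2)∫_γ |c|² ds ≤ E. -/

import Mathlib

open MeasureTheory Real

theorem helfrich_energy_bound_psd
    {n : ℕ} (γ : ℝ → EuclideanSpace ℝ (Fin n))
    (A : EuclideanSpace ℝ (Fin n) →L[ℝ] EuclideanSpace ℝ (Fin n))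
    (M : EuclideanSpace ℝ (Fin n)) (f : EuclideanSpace ℝ (Fin n) → ℝ)
    (lam E ℓ : ℝ) (hℓ : 0 < ℓ) (hlam : 0 < lam)
    (hγ : ContDiff ℝ (⊤ : ℕ∞) γ) (hper : Function.Periodic γ ℓ)
    (harc : ∀ s, ‖deriv γ s‖ = 1)
    (hf : ContDiff ℝ (⊤ : ℕ∞) f)
    (hpsd : ∀ v : EuclideanSpace ℝ (Fin n), (0:ℝ) ≤ inner ℝ v (A v))
    (hE : (1/2) * (∫ s in (0:ℝ)..ℓ,
        ‖deriv (deriv γ) s - (A (γ s) + M + f (γ s) • deriv γ s)‖ ^ 2) + lam * ℓ ≤ E) :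
    (1/2) * (∫ s in (0:ℝ)..ℓ, ‖deriv (deriv γ) s‖ ^ 2) +
      (1/2) * (∫ s in (0:ℝ)..ℓ, ‖A (γ s) + M + f (γ s) • deriv γ s‖ ^ 2) ≤ E := by
  set τ : ℝ → EuclideanSpace ℝ (Fin n) := deriv γ with hτdef
  set κ : ℝ → EuclideanSpace ℝ (Fin n) := deriv τ with hκdef
  have hτc : ContDiff ℝ (⊤:ℕ∞) τ := (contDiff_infty_iff_deriv.mp (hγ.of_le (by simp))).2
  have hκc : ContDiff ℝ (⊤:ℕ∞) κ := (contDiff_infty_iff_deriv.mp hτc).2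
  have hγd : Differentiable ℝ γ := hγ.differentiable (by simp)
  have hτd : Differentiable ℝ τ := (contDiff_infty_iff_deriv.mp hτc).1
  set c : ℝ → EuclideanSpace ℝ (Fin n) := fun s => A (γ s) + M + f (γ s) • τ s with hcdef
  have hccont : Continuous c := by
    apply Continuous.add
    · exact (A.continuous.comp hγ.continuous).add continuous_const
    · exact ((hf.continuous.comp hγ.continuous).smul hτc.continuous)
  -- periodicity of τ
  have hτper : Function.Periodic τ ℓ := by
    intro s
    have : (fun t => γ (t + ℓ)) = γ := funext hper
    calc τ (s + ℓ) = deriv (fun t => γ (t + ℓ)) s := (deriv_comp_add_const γ ℓ s).symm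
    _ = τ s := by rw [this]
  -- inner κ τ = 0
  have hκτ : ∀ s, (inner ℝ (κ s) (τ s) : ℝ) = 0 := by
    intro s
    have h1 : HasDerivAt (fun t => (inner ℝ (τ t) (τ t) : ℝ))
        ((inner ℝ (τ s) (κ s) : ℝ) + inner ℝ (κ s) (τ s)) s :=
      HasDerivAt.inner ℝ (hτd s).hasDerivAt (hτd s).hasDerivAt
    have h2 : (fun t => (inner ℝ (τ t) (τ t) : ℝ)) = fun _ => (1:ℝ) := by
      funext t
      rw [real_inner_self_eq_norm_sq, harc t]; norm_num
    rw [h2] at h1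
    have h3 : (inner ℝ (τ s) (κ s) : ℝ) + inner ℝ (κ s) (τ s) = 0 := by
      have := (hasDerivAt_const s (1:ℝ)).unique h1
      linarith [this]
    have h4 : (inner ℝ (κ s) (τ s):ℝ) = inner ℝ (τ s) (κ s) := real_inner_comm _ _
    linarith
  -- FTC for inner τ M
  have hM : (∫ s in (0:ℝ)..ℓ, (inner ℝ (κ s) M : ℝ)) = 0 := by
    have h1 : ∀ s ∈ Set.uIcc (0:ℝ) ℓ, HasDerivAt (fun t => (inner ℝ (τ t) M : ℝ))
        (inner ℝ (κ s) M) s := by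
      intro s _
      have := HasDerivAt.inner ℝ (hτd s).hasDerivAt (hasDerivAt_const s M)
      simpa using this
    have h2 : IntervalIntegrable (fun s => (inner ℝ (κ s) M : ℝ)) volume 0 ℓ :=
      (Continuous.inner hκc.continuous continuous_const).intervalIntegrable 0 ℓ
    rw [intervalIntegral.integral_eq_sub_of_hasDerivAt h1 h2]
    have : τ ℓ = τ 0 := by simpa using hτper 0
    rw [this]; ring
  -- FTC for inner τ (A γ)
  have hAint : (∫ s in (0:ℝ)..ℓ, ((inner ℝ (κ s) (A (γ s)) : ℝ) + inner ℝ (τ s) (A (τ s)))) = 0 := by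
    have h1 : ∀ s ∈ Set.uIcc (0:ℝ) ℓ, HasDerivAt (fun t => (inner ℝ (τ t) (A (γ t)) : ℝ))
        ((inner ℝ (κ s) (A (γ s)) : ℝ) + inner ℝ (τ s) (A (τ s))) s := by
      intro s _
      have hAγ : HasDerivAt (fun t => A (γ t)) (A (τ s)) s :=
        A.hasFDerivAt.comp_hasDerivAt s (hγd s).hasDerivAt
      have := HasDerivAt.inner ℝ (hτd s).hasDerivAt hAγ
      simpa [add_comm] using this
    have h2 : IntervalIntegrable
        (fun s => (inner ℝ (κ s) (A (γ s)) : ℝ) + inner ℝ (τ s) (A (τ s))) volume 0 ℓ := by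
      apply Continuous.intervalIntegrable
      exact (hκc.continuous.inner (A.continuous.comp hγ.continuous)).add
        (hτc.continuous.inner (A.continuous.comp hτc.continuous))
    rw [intervalIntegral.integral_eq_sub_of_hasDerivAt h1 h2]
    have hτ0 : τ ℓ = τ 0 := by simpa using hτper 0
    have hγ0 : γ ℓ = γ 0 := by simpa using hper 0
    rw [hτ0, hγ0]; ring
  -- key integrability facts
  have hiκA : IntervalIntegrable (fun s => (inner ℝ (κ s) (A (γ s)) : ℝ)) volume 0 ℓ :=
    (hκc.continuous.inner (A.continuous.comp hγ.continuous)).intervalIntegrable 0 ℓ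
  have hiτA : IntervalIntegrable (fun s => (inner ℝ (τ s) (A (τ s)) : ℝ)) volume 0 ℓ :=
    (hτc.continuous.inner (A.continuous.comp hτc.continuous)).intervalIntegrable 0 ℓ
  have hA : (∫ s in (0:ℝ)..ℓ, (inner ℝ (κ s) (A (γ s)) : ℝ))
      = - ∫ s in (0:ℝ)..ℓ, (inner ℝ (τ s) (A (τ s)) : ℝ) := by
    have := intervalIntegral.integral_add hiκA hiτA
    rw [this] at hAint
    linarith
  -- main inner product integral
  have hinner : (∫ s in (0:ℝ)..ℓ, (inner ℝ (κ s) (c s) : ℝ)) ≤ 0 := by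
    have heq : ∀ s, (inner ℝ (κ s) (c s) : ℝ)
        = inner ℝ (κ s) (A (γ s)) + inner ℝ (κ s) M := by
      intro s
      simp only [hcdef, inner_add_right, real_inner_smul_right, hκτ s]
      ring
    rw [show (fun s => (inner ℝ (κ s) (c s) : ℝ)) = fun s =>
        (inner ℝ (κ s) (A (γ s)) : ℝ) + inner ℝ (κ s) M from funext heq]
    rw [intervalIntegral.integral_add hiκA
      ((hκc.continuous.inner continuous_const).intervalIntegrable 0 ℓ), hA, hM]
    have : (0:ℝ) ≤ ∫ s in (0:ℝ)..ℓ, (inner ℝ (τ s) (A (τ s)) : ℝ) := by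
      apply intervalIntegral.integral_nonneg hℓ.le
      intro s _
      exact hpsd (τ s)
    linarith
  -- expand the square
  have hiκ : IntervalIntegrable (fun s => ‖κ s‖ ^ 2) volume 0 ℓ :=
    (hκc.continuous.norm.pow 2).intervalIntegrable 0 ℓ
  have hic : IntervalIntegrable (fun s => ‖c s‖ ^ 2) volume 0 ℓ :=
    (hccont.norm.pow 2).intervalIntegrable 0 ℓ
  have hiinner : IntervalIntegrable (fun s => (2:ℝ) * inner ℝ (κ s) (c s)) volume 0 ℓ :=
    (continuous_const.mul (hκc.continuous.inner hccont)).intervalIntegrable 0 ℓ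
  have hexp : (∫ s in (0:ℝ)..ℓ, ‖κ s - c s‖ ^ 2)
      = (∫ s in (0:ℝ)..ℓ, ‖κ s‖ ^ 2) - (∫ s in (0:ℝ)..ℓ, (2:ℝ) * inner ℝ (κ s) (c s))
        + ∫ s in (0:ℝ)..ℓ, ‖c s‖ ^ 2 := by
    rw [← intervalIntegral.integral_sub hiκ hiinner,
      ← intervalIntegral.integral_add (hiκ.sub hiinner) hic]
    congr 1
    funext s
    exact norm_sub_sq_real (κ s) (c s)
  have hmul : (∫ s in (0:ℝ)..ℓ, (2:ℝ) * inner ℝ (κ s) (c s))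
      = 2 * ∫ s in (0:ℝ)..ℓ, (inner ℝ (κ s) (c s) : ℝ) := by
    exact intervalIntegral.integral_const_mul 2 _
  have hfinal : (∫ s in (0:ℝ)..ℓ, ‖κ s‖ ^ 2) + (∫ s in (0:ℝ)..ℓ, ‖c s‖ ^ 2)
      ≤ ∫ s in (0:ℝ)..ℓ, ‖κ s - c s‖ ^ 2 := by
    rw [hexp, hmul]
    linarith
  have hlamℓ : 0 < lam * ℓ := mul_pos hlam hℓ
  have : (1/2) * (∫ s in (0:ℝ)..ℓ, ‖κ s‖ ^ 2) + (1/2) * (∫ s in (0:ℝ)..ℓ, ‖c s‖ ^ 2)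
      ≤ (1/2) * (∫ s in (0:ℝ)..ℓ, ‖κ s - c s‖ ^ 2) + lam * ℓ := by
    linarith
  calc (1/2) * (∫ s in (0:ℝ)..ℓ, ‖deriv (deriv γ) s‖ ^ 2) +
      (1/2) * (∫ s in (0:ℝ)..ℓ, ‖A (γ s) + M + f (γ s) • deriv γ s‖ ^ 2)
      = (1/2) * (∫ s in (0:ℝ)..ℓ, ‖κ s‖ ^ 2) + (1/2) * (∫ s in (0:ℝ)..ℓ, ‖c s‖ ^ 2) := rfl
    _ ≤ (1/2) * (∫ s in (0:ℝ)..ℓ, ‖κ s - c s‖ ^ 2) + lam * ℓ := this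
    _ ≤ E := hE
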